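/- arXiv:2301.09092 — 8 statements merged into one kernel-verified Lean document; each statement's English description precedes it below -/
import Mathlib

section
/- If E is a coarse structure on a nonempty set X, then the collection C_E consisting of all families A of subsets of X for which there exists E ∈ E with A ⊆ E(B) for all A, B ∈ A, is a large scale resemblance on X. -/
def veeFam {X : Type*} (𝓐 𝓑 : Set (Set X)) : Set (Set X) :=
  {C | ∃ A ∈ 𝓐, ∃ B ∈ 𝓑, C = A ∪ B}

structure IsLSR {X : Type*} (𝔠 : Set (Set (Set X))) : Prop where
  singleton_mem : ∀ A : Set X, ({A} : Set (Set X)) ∈ 𝔠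
  subfamily : ∀ ⦃𝓐 𝓑 : Set (Set X)⦄, 𝓐 ∈ 𝔠 → 𝓑 ⊆ 𝓐 → 𝓑 ∈ 𝔠
  union_mem : ∀ ⦃𝓐 𝓑 : Set (Set X)⦄, 𝓐 ∈ 𝔠 → 𝓑 ∈ 𝔠 → (𝓐 ∩ 𝓑).Nonempty → 𝓐 ∪ 𝓑 ∈ 𝔠
  vee_mem : ∀ ⦃𝓐 𝓑 : Set (Set X)⦄, 𝓐 ∈ 𝔠 → 𝓑 ∈ 𝔠 → veeFam 𝓐 𝓑 ∈ 𝔠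
def relImage {X : Type*} (E : Set (X × X)) (A : Set X) : Set X :=
  {b | ∃ a ∈ A, (a, b) ∈ E}

structure IsCoarseStructure {X : Type*} (𝓔 : Set (Set (X × X))) : Prop where
  subset_mem : ∀ ⦃E F : Set (X × X)⦄, F ∈ 𝓔 → E ⊆ F → E ∈ 𝓔
  union_mem : ∀ ⦃E F : Set (X × X)⦄, E ∈ 𝓔 → F ∈ 𝓔 → E ∪ F ∈ 𝓔
  inv_mem : ∀ ⦃E : Set (X × X)⦄, E ∈ 𝓔 → {p : X × X | (p.2, p.1) ∈ E} ∈ 𝓔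
  comp_mem : ∀ ⦃E F : Set (X × X)⦄, E ∈ 𝓔 → F ∈ 𝓔 →
    {p : X × X | ∃ z : X, (p.1, z) ∈ F ∧ (z, p.2) ∈ E} ∈ 𝓔
  diag_mem : {p : X × X | p.1 = p.2} ∈ 𝓔

def CofE {X : Type*} (𝓔 : Set (Set (X × X))) : Set (Set (Set X)) :=
  {𝓐 | ∃ E ∈ 𝓔, ∀ A ∈ 𝓐, ∀ B ∈ 𝓐, A ⊆ relImage E B}

theorem stmt0 {X : Type*} [Nonempty X] (𝓔 : Set (Set (X × X)))
    (h : IsCoarseStructure 𝓔) : IsLSR (CofE 𝓔) := by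
  constructor
  · intro A
    exact ⟨_, h.diag_mem, by
      rintro A' rfl B rfl x hx; exact ⟨x, hx, rfl⟩⟩
  · rintro 𝓐 𝓑 ⟨E, hE, hA⟩ hsub
    exact ⟨E, hE, fun A hA' B hB' => hA A (hsub hA') B (hsub hB')⟩
  · rintro 𝓐 𝓑 ⟨E, hE, hAE⟩ ⟨F, hF, hBF⟩ ⟨C, hC𝓐, hC𝓑⟩
    have hG : E ∪ F ∈ 𝓔 := h.union_mem hE hF
    refine ⟨_, h.comp_mem hG hG, ?_⟩
    have key : ∀ A B : Set X, A ⊆ relImage (E ∪ F) C → C ⊆ relImage (E ∪ F) B →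
        A ⊆ relImage {p : X × X | ∃ z : X, (p.1, z) ∈ (E ∪ F) ∧ (z, p.2) ∈ (E ∪ F)} B := by
      intro A B h1 h2 a ha
      obtain ⟨c, hc, hca⟩ := h1 ha
      obtain ⟨b, hb, hbc⟩ := h2 hc
      exact ⟨b, hb, c, hbc, hca⟩
    intro A hA B hB
    have step : ∀ D ∈ 𝓐 ∪ 𝓑, D ⊆ relImage (E ∪ F) C ∧ C ⊆ relImage (E ∪ F) D := by
      rintro D (hD | hD)
      · exact ⟨fun x hx => (hAE D hD C hC𝓐 hx).imp fun c ⟨h1,h2⟩ => ⟨h1, Or.inl h2⟩,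
          fun x hx => (hAE C hC𝓐 D hD hx).imp fun c ⟨h1,h2⟩ => ⟨h1, Or.inl h2⟩⟩
      · exact ⟨fun x hx => (hBF D hD C hC𝓑 hx).imp fun c ⟨h1,h2⟩ => ⟨h1, Or.inr h2⟩,
          fun x hx => (hBF C hC𝓑 D hD hx).imp fun c ⟨h1,h2⟩ => ⟨h1, Or.inr h2⟩⟩
    exact key A B (step A hA).1 (step B hB).2
  · rintro 𝓐 𝓑 ⟨E, hE, hAE⟩ ⟨F, hF, hBF⟩
    refine ⟨E ∪ F, h.union_mem hE hF, ?_⟩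
    rintro _ ⟨A, hA, B, hB, rfl⟩ _ ⟨A', hA', B', hB', rfl⟩ x hx
    rcases hx with hx | hx
    · obtain ⟨a, ha, hax⟩ := hAE A hA A' hA' hx
      exact ⟨a, Or.inl ha, Or.inl hax⟩
    · obtain ⟨b, hb, hbx⟩ := hBF B hB B' hB' hx
      exact ⟨b, Or.inr hb, Or.inr hbx⟩
end

section
/- Let X be a dense subspace of a topological space Y. Then the family C_Y = {A ⊆ P(X) : cl_Y(A) ∩ (Y∖X) = cl_Y(B) ∩ (Y∖X) for all A,B ∈ A} is a large scale resemblance on X. -/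
theorem stmt7 {Y : Type*} [TopologicalSpace Y] (X : Set Y) (hX : Dense X) :
    IsLSR {𝓐 : Set (Set ↥X) | ∀ A ∈ 𝓐, ∀ B ∈ 𝓐,
      closure (Subtype.val '' A) ∩ Xᶜ = closure (Subtype.val '' B) ∩ Xᶜ} := by
  constructor
  · intro A A' hA' B' hB'
    rw [Set.mem_singleton_iff.mp hA', Set.mem_singleton_iff.mp hB']
  · intro 𝓐 𝓑 h𝓐 hsub A hA B hB
    exact h𝓐 A (hsub hA) B (hsub hB)
  · rintro 𝓐 𝓑 h𝓐 h𝓑 ⟨C, hC𝓐, hC𝓑⟩ A hA B hB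
    have key : ∀ D, D ∈ 𝓐 ∪ 𝓑 →
        closure (Subtype.val '' D) ∩ Xᶜ = closure (Subtype.val '' C) ∩ Xᶜ := by
      rintro D (hD | hD)
      · exact h𝓐 D hD C hC𝓐
      · exact h𝓑 D hD C hC𝓑
    rw [key A hA, key B hB]
  · rintro 𝓐 𝓑 h𝓐 h𝓑 A ⟨A1, hA1, A2, hA2, rfl⟩ B ⟨B1, hB1, B2, hB2, rfl⟩
    rw [Set.image_union, Set.image_union, closure_union, closure_union,
      Set.union_inter_distrib_right, Set.union_inter_distrib_right,
      h𝓐 A1 hA1 B1 hB1, h𝓑 A2 hA2 B2 hB2]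
end

section
/- Let X = ℝ with the discrete topology, Y its one-point compactification, 𝔠 = C_Y (so A ∈ 𝔠 iff all members of A are finite or all are infinite). Then the family N_𝔠, defined by A ∈ N_𝔠 iff ⋂_{A∈A}A ≠ ∅ or all elements of A are infinite, is a nearness on X, even though 𝔠 ≠ C_E for every coarse structure E on X. -/
def llRel {X : Type*} (𝓑 𝓐 : Set (Set X)) : Prop := ∀ A ∈ 𝓐, ∃ B ∈ 𝓑, B ⊆ A

structure IsNearness {X : Type*} (N : Set (Set (Set X))) : Prop where
  inter_mem : ∀ 𝓐 : Set (Set X), (⋂₀ 𝓐).Nonempty → 𝓐 ∈ N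
  mono : ∀ ⦃𝓐 𝓑 : Set (Set X)⦄, 𝓐 ∈ N → llRel 𝓐 𝓑 → 𝓑 ∈ N
  not_empty_mem : ∀ 𝓐 ∈ N, (∅ : Set X) ∉ 𝓐
  vee_not_mem : ∀ ⦃𝓐 𝓑 : Set (Set X)⦄, 𝓐 ∉ N → 𝓑 ∉ N → veeFam 𝓐 𝓑 ∉ N

/-!
In `veeFam 𝓐 𝓑` a point lies in every member iff it lies in every member of `𝓐` or in every
member of `𝓑`, and a union of two finite sets is finite; so the two ways of being near are
each preserved by `∨`, which gives axiom (iv).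

If `𝔠 = C_E`, the family of all singletons lies in `𝔠`, and a witness `E` for it must contain
every pair `(a, b)`, since `{b} ⊆ E({a})`. Then `E({0}) = ℝ`, so `{{0}, ℝ} ∈ C_E`, although it
mixes a finite and an infinite set.
-/

open Set

section Nearness

variable {X : Type*}

lemma mem_veeFam_of_mem {𝓐 𝓑 : Set (Set X)} {A B : Set X} (hA : A ∈ 𝓐) (hB : B ∈ 𝓑) :
    A ∪ B ∈ veeFam 𝓐 𝓑 :=
  ⟨A, hA, B, hB, rfl⟩

lemma sInter_veeFam (𝓐 𝓑 : Set (Set X)) : ⋂₀ veeFam 𝓐 𝓑 = ⋂₀ 𝓐 ∪ ⋂₀ 𝓑 := by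
  ext x
  simp only [veeFam, mem_sInter, mem_union, mem_ofPred_eq, forall_exists_index, and_imp]
  constructor
  · intro h
    by_contra! hx
    obtain ⟨⟨A, hA, hxA⟩, B, hB, hxB⟩ := hx
    exact (h _ A hA B hB rfl).elim hxA hxB
  · rintro (h | h) _ A hA B hB rfl
    exacts [Or.inl (h A hA), Or.inr (h B hB)]

theorem isNearness_sInter_nonempty_or_infinite :
    IsNearness {𝓐 : Set (Set X) | (⋂₀ 𝓐).Nonempty ∨ ∀ A ∈ 𝓐, A.Infinite} where
  inter_mem _ h := Or.inl h
  mono := by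
    rintro 𝓐 𝓑 (⟨x, hx⟩ | hinf) hll
    · refine Or.inl ⟨x, fun B hB => ?_⟩
      obtain ⟨A, hA, hAB⟩ := hll B hB
      exact hAB (hx A hA)
    · refine Or.inr fun B hB => ?_
      obtain ⟨A, hA, hAB⟩ := hll B hB
      exact (hinf A hA).mono hAB
  not_empty_mem := by
    rintro 𝓐 (⟨x, hx⟩ | hinf) h0
    exacts [hx ∅ h0, hinf ∅ h0 finite_empty]
  vee_not_mem := by
    intro 𝓐 𝓑 h𝓐 h𝓑
    simp only [mem_ofPred_eq, not_or, not_nonempty_iff_eq_empty, not_forall,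
      not_infinite] at h𝓐 h𝓑 ⊢
    obtain ⟨h𝓐_empty, A, hA, hA_fin⟩ := h𝓐
    obtain ⟨h𝓑_empty, B, hB, hB_fin⟩ := h𝓑
    exact ⟨by rw [sInter_veeFam, h𝓐_empty, h𝓑_empty, union_empty],
      A ∪ B, mem_veeFam_of_mem hA hB, hA_fin.union hB_fin⟩

end Nearness

section CoarseFamilies

variable {X : Type*} {𝓔 : Set (Set (X × X))}

lemma univ_mem_of_range_singleton_mem_CofE (h : range (fun x : X => ({x} : Set X)) ∈ CofE 𝓔) :
    univ ∈ 𝓔 := by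
  obtain ⟨E, hE, hsub⟩ := h
  have hE_univ : E = univ := eq_univ_of_forall fun ⟨a, b⟩ => by
    obtain ⟨_, rfl, hab⟩ := hsub {b} ⟨b, rfl⟩ {a} ⟨a, rfl⟩ rfl
    exact hab
  exact hE_univ ▸ hE

lemma relImage_univ {B : Set X} (hB : B.Nonempty) : relImage univ B = univ :=
  eq_univ_of_forall fun _ => ⟨hB.some, hB.some_mem, mem_univ _⟩

lemma mem_CofE_of_univ_mem (h𝓔 : univ ∈ 𝓔) {𝓐 : Set (Set X)} (h𝓐 : ∀ A ∈ 𝓐, A.Nonempty) :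
    𝓐 ∈ CofE 𝓔 :=
  ⟨univ, h𝓔, fun _ _ B hB => (relImage_univ (h𝓐 B hB)).symm ▸ subset_univ _⟩

theorem setOf_forall_finite_or_forall_infinite_ne_CofE [Infinite X] :
    {𝓐 : Set (Set X) | (∀ A ∈ 𝓐, A.Finite) ∨ ∀ A ∈ 𝓐, A.Infinite} ≠ CofE 𝓔 := by
  intro heq
  have h𝓔 : univ ∈ 𝓔 := by
    refine univ_mem_of_range_singleton_mem_CofE ?_
    rw [← heq]
    left
    rintro _ ⟨x, rfl⟩
    exact finite_singleton x
  obtain ⟨x⟩ : Nonempty X := inferInstance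
  have hmixed : {{x}, univ} ∈ CofE 𝓔 := mem_CofE_of_univ_mem h𝓔 <| by
    rintro A (rfl | rfl)
    exacts [singleton_nonempty x, univ_nonempty]
  rcases heq ▸ hmixed with h | h
  · exact infinite_univ (h univ (Or.inr rfl))
  · exact h {x} (Or.inl rfl) (finite_singleton x)

end CoarseFamilies

theorem stmt11 :
    IsNearness ({𝓐 : Set (Set ℝ) | (⋂₀ 𝓐).Nonempty ∨ ∀ A ∈ 𝓐, A.Infinite} :
      Set (Set (Set ℝ))) ∧
    ∀ 𝓔 : Set (Set (ℝ × ℝ)), IsCoarseStructure 𝓔 →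
      ({𝓐 : Set (Set ℝ) | (∀ A ∈ 𝓐, A.Finite) ∨ (∀ A ∈ 𝓐, A.Infinite)} :
        Set (Set (Set ℝ))) ≠ CofE 𝓔 :=
  ⟨isNearness_sInter_nonempty_or_infinite,
    fun _ _ => setOf_forall_finite_or_forall_infinite_ne_CofE⟩
end

section
/- Let (X,d) be a metric space, 𝔠 = C_d, and X unbounded. Suppose A ∈ N_𝔠 with ⋂_{A∈A} cl(A) = ∅, where (X, λ_d) is asymptotically normal and every unbounded L ⊆ X contains two unbounded asymptotically disjoint subsets. Then no bunch in the nearness space (X, N_𝔠) contains A. -/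
def LSRBounded {X : Type*} (𝔠 : Set (Set (Set X))) (B : Set X) : Prop :=
  B = ∅ ∨ ∃ x : X, ({B, {x}} : Set (Set X)) ∈ 𝔠
def Nc {X : Type*} [TopologicalSpace X] (𝔠 : Set (Set (Set X))) : Set (Set (Set X)) :=
  {𝓐 | (⋂ A ∈ 𝓐, closure A).Nonempty ∨
    ∃ 𝓑 ∈ 𝔠, (∀ B ∈ 𝓑, ¬ LSRBounded 𝔠 B) ∧ llRel 𝓑 𝓐}

def Cd (X : Type*) [MetricSpace X] : Set (Set (Set X)) :=
  {𝓐 | ∃ k : ℝ, 0 < k ∧ ∀ A ∈ 𝓐, ∀ B ∈ 𝓐,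
    EMetric.hausdorffEdist A B ≤ ENNReal.ofReal k}

def lamd {X : Type*} [MetricSpace X] (A B : Set X) : Prop :=
  EMetric.hausdorffEdist A B ≠ ⊤

def dBounded {X : Type*} [MetricSpace X] (D : Set X) : Prop :=
  D = ∅ ∨ ∃ x : X, lamd D ({x} : Set X)

def dAsympDisjoint {X : Type*} [MetricSpace X] (A B : Set X) : Prop :=
  ∀ L₁ : Set X, L₁ ⊆ A → ∀ L₂ : Set X, L₂ ⊆ B →
    ¬ dBounded L₁ → ¬ dBounded L₂ → ¬ lamd L₁ L₂

structure IsBunch {X : Type*} [TopologicalSpace X]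
    (N : Set (Set (Set X))) (C : Set (Set X)) : Prop where
  nonempty : C.Nonempty
  mem_near : C ∈ N
  union_iff : ∀ A B : Set X, A ∪ B ∈ C ↔ A ∈ C ∨ B ∈ C
  closure_mem : ∀ A : Set X, closure A ∈ C → A ∈ C


/-!
A bunch `C` near in `N_𝔠` either has a common point in the closures of its members, which
`⋂ cl A = ∅` forbids once `𝓐 ⊆ C`, or is refined by a family `𝓓 ∈ C_d` of unbounded sets.
In the second case split an unbounded `D₀ ∈ 𝓓` into asymptotically disjoint unbounded `L₁, L₂`,
and cover `X = X₁ ∪ X₂` with `Xᵢ` asymptotically disjoint from `Lᵢ`. As `X ∈ C`, some `Xᵢ ∈ C`,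
so `Xᵢ` contains some `D₁ ∈ 𝓓`. Since `d_H(D₀, D₁) < ∞`, the points of `D₁` close to `Lᵢ` form
an unbounded subset of `Xᵢ` at finite Hausdorff distance from `Lᵢ`: a contradiction.
-/

section Metric

variable {X : Type*} [MetricSpace X]

lemma lamd_iff {A B : Set X} : lamd A B ↔ Metric.hausdorffEDist A B ≠ ⊤ := Iff.rfl

lemma lamd_comm {A B : Set X} : lamd A B ↔ lamd B A := by
  rw [lamd_iff, lamd_iff, Metric.hausdorffEDist_comm]

lemma lamd.trans {A B C : Set X} (hAB : lamd A B) (hBC : lamd B C) : lamd A C :=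
  ne_top_of_le_ne_top (ENNReal.add_ne_top.mpr ⟨hAB, hBC⟩) Metric.hausdorffEDist_triangle

lemma dBounded.of_lamd {A B : Set X} (hB : dBounded B) (h : lamd A B) : dBounded A := by
  rcases hB with rfl | ⟨x, hx⟩
  · rcases A.eq_empty_or_nonempty with hA | hA
    · exact Or.inl hA
    · exact absurd (Metric.hausdorffEDist_empty hA) h
  · exact Or.inr ⟨x, h.trans hx⟩

lemma pair_mem_Cd_of_lamd {A B : Set X} (h : lamd A B) : ({A, B} : Set (Set X)) ∈ Cd X := by
  refine ⟨(Metric.hausdorffEDist A B).toReal + 1, by positivity, ?_⟩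
  have hle : Metric.hausdorffEDist A B ≤
      ENNReal.ofReal ((Metric.hausdorffEDist A B).toReal + 1) :=
    (ENNReal.le_ofReal_iff_toReal_le (lamd_iff.mp h) (by positivity)).mpr (by linarith)
  rintro S (rfl | rfl) T (rfl | rfl) <;> show Metric.hausdorffEDist _ _ ≤ _
  · simp
  · exact hle
  · rwa [Metric.hausdorffEDist_comm]
  · simp

lemma lsrBounded_Cd_of_dBounded {B : Set X} (h : dBounded B) : LSRBounded (Cd X) B :=
  h.imp id fun ⟨x, hx⟩ => ⟨x, pair_mem_Cd_of_lamd hx⟩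

lemma lamd_of_mem_Cd {𝓓 : Set (Set X)} (h𝓓 : 𝓓 ∈ Cd X) {A B : Set X} (hA : A ∈ 𝓓)
    (hB : B ∈ 𝓓) : lamd A B := by
  obtain ⟨k, -, hk⟩ := h𝓓
  exact ne_top_of_le_ne_top ENNReal.ofReal_ne_top (hk A hA B hB)

lemma exists_subset_not_dBounded_lamd {D₀ D₁ L : Set X} (hD : lamd D₀ D₁) (hL : L ⊆ D₀)
    (hLu : ¬ dBounded L) : ∃ L' ⊆ D₁, ¬ dBounded L' ∧ lamd L' L := by
  set r := Metric.hausdorffEDist D₀ D₁ + 1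
  have hr : Metric.hausdorffEDist D₀ D₁ < r := ENNReal.lt_add_right hD one_ne_zero
  set L' := {z ∈ D₁ | ∃ y ∈ L, edist y z ≤ r}
  have hLL' : Metric.hausdorffEDist L L' ≤ r := by
    apply Metric.hausdorffEDist_le_of_mem_edist
    · intro y hy
      have hy' : Metric.infEDist y D₁ < r :=
        (Metric.infEDist_le_hausdorffEDist_of_mem (hL hy)).trans_lt hr
      obtain ⟨z, hz, hyz⟩ := Metric.infEDist_lt_iff.mp hy'
      exact ⟨z, ⟨hz, y, hy, hyz.le⟩, hyz.le⟩
    · rintro z ⟨-, y, hy, hyz⟩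
      exact ⟨y, hy, by rwa [edist_comm]⟩
  have hlam : lamd L L' :=
    ne_top_of_le_ne_top (ENNReal.add_ne_top.mpr ⟨hD, ENNReal.one_ne_top⟩) hLL'
  exact ⟨L', fun z hz => hz.1, fun h => hLu (h.of_lamd hlam), lamd_comm.mp hlam⟩

lemma not_dAsympDisjoint_of_llRel {𝓓 C : Set (Set X)} (h𝓓 : 𝓓 ∈ Cd X) (hll : llRel 𝓓 C)
    {Y D₀ L : Set X} (hY : Y ∈ C) (hD₀ : D₀ ∈ 𝓓) (hL : L ⊆ D₀) (hLu : ¬ dBounded L) :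
    ¬ dAsympDisjoint Y L := by
  intro hYL
  obtain ⟨D₁, hD₁, hD₁Y⟩ := hll Y hY
  obtain ⟨L', hL'D₁, hL'u, hL'L⟩ :=
    exists_subset_not_dBounded_lamd (lamd_of_mem_Cd h𝓓 hD₀ hD₁) hL hLu
  exact hYL L' (hL'D₁.trans hD₁Y) L le_rfl hL'u hLu hL'L

end Metric

lemma IsBunch.univ_mem {X : Type*} [TopologicalSpace X] {N : Set (Set (Set X))}
    {C : Set (Set X)} (hC : IsBunch N C) : Set.univ ∈ C := by
  obtain ⟨A, hA⟩ := hC.nonempty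
  simpa using (hC.union_iff A Set.univ).mpr (Or.inl hA)

theorem stmt12_general {X : Type*} [MetricSpace X]
    (hnorm : ∀ A B : Set X, dAsympDisjoint A B →
      ∃ X₁ X₂ : Set X, X₁ ∪ X₂ = Set.univ ∧ dAsympDisjoint X₁ A ∧ dAsympDisjoint X₂ B)
    (hsplit : ∀ L : Set X, ¬ dBounded L →
      ∃ L₁ L₂ : Set X, L₁ ⊆ L ∧ L₂ ⊆ L ∧ ¬ dBounded L₁ ∧ ¬ dBounded L₂ ∧
        dAsympDisjoint L₁ L₂)
    (𝓐 : Set (Set X))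
    (hcl : (⋂ A ∈ 𝓐, closure A) = ∅) :
    ∀ C : Set (Set X), IsBunch (Nc (Cd X)) C → ¬ 𝓐 ⊆ C := by
  intro C hC hsub
  rcases hC.mem_near with ⟨x, hx⟩ | ⟨𝓓, h𝓓, h𝓓unb, hll⟩
  · exact ((Set.biInter_subset_biInter_left hsub).trans hcl.subset) hx
  obtain ⟨D₀, hD₀, -⟩ := hll _ hC.univ_mem
  have hD₀u : ¬ dBounded D₀ := fun h => h𝓓unb D₀ hD₀ (lsrBounded_Cd_of_dBounded h)
  obtain ⟨L₁, L₂, hL₁, hL₂, hL₁u, hL₂u, hL₁₂⟩ := hsplit D₀ hD₀u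
  obtain ⟨X₁, X₂, hX, hX₁, hX₂⟩ := hnorm L₁ L₂ hL₁₂
  rcases (hC.union_iff X₁ X₂).mp (hX ▸ hC.univ_mem) with h | h
  · exact not_dAsympDisjoint_of_llRel h𝓓 hll h hD₀ hL₁ hL₁u hX₁
  · exact not_dAsympDisjoint_of_llRel h𝓓 hll h hD₀ hL₂ hL₂u hX₂

theorem stmt12 {X : Type*} [MetricSpace X]
    (hXunb : ¬ dBounded (Set.univ : Set X))
    (hnorm : ∀ A B : Set X, dAsympDisjoint A B →
      ∃ X₁ X₂ : Set X, X₁ ∪ X₂ = Set.univ ∧ dAsympDisjoint X₁ A ∧ dAsympDisjoint X₂ B)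
    (hsplit : ∀ L : Set X, ¬ dBounded L →
      ∃ L₁ L₂ : Set X, L₁ ⊆ L ∧ L₂ ⊆ L ∧ ¬ dBounded L₁ ∧ ¬ dBounded L₂ ∧
        dAsympDisjoint L₁ L₂)
    (𝓐 : Set (Set X)) (h𝓐 : 𝓐 ∈ Nc (Cd X))
    (hcl : (⋂ A ∈ 𝓐, closure A) = ∅) :
    ∀ C : Set (Set X), IsBunch (Nc (Cd X)) C → ¬ 𝓐 ⊆ C :=
  stmt12_general hnorm hsplit 𝓐 hcl
end

section
/- Let d be a metric on X and 𝔠_d = {A ⊆ P(X) : ∃k>0 with d_H(A,B) ≤ k for all A,B ∈ A} (d_H the Hausdorff distance). A family U of subsets of X is uniformly bounded in the LS.R space (X, 𝔠_d) if and only if there exists R > 0 with diam(U) ≤ R for all U ∈ U. -/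
def AVfam {X : Type*} (𝓥 : Set (Set X)) : Set (Set X) :=
  {A | A ⊆ ⋃₀ 𝓥 ∧ ∀ U ∈ 𝓥, (A ∩ U).Nonempty}

def LSRUnifBounded {X : Type*} (𝔠 : Set (Set (Set X))) (𝓤 : Set (Set X)) : Prop :=
  ∀ 𝓥 : Set (Set X), 𝓥 ⊆ 𝓤 → 𝓥.Nonempty → AVfam 𝓥 ∈ 𝔠

/-!
If every member of `𝓥` has diameter at most `R`, any two sets in `A_𝓥` are within Hausdorff
distance `R`, since a point of one lies in some `U ∈ 𝓥` which the other one meets.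

Conversely, from members of `𝓤` of unbounded diameter we extract `Uₙ ∈ 𝓤` and points
`aₙ, bₙ ∈ Uₙ` with `n ≤ d(aₘ, bₙ)` for all `m, n`. Then `{aₙ}` and `{bₙ}` both lie in `A_𝓥` for
`𝓥 = {Uₙ}`, at infinite Hausdorff distance. To extract them, fix a base point `p`: either the
long pairs can be taken with one end in a fixed ball around `p`, and that end serves as `aₙ`,
or they can be taken with both ends arbitrarily far from `p`, and a recursion pushes each new
pair beyond the previous ones.
-/

open Metric

section PseudoEMetric

variable {X : Type*} [PseudoEMetricSpace X] {𝓥 : Set (Set X)} {A B : Set X}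

theorem infEDist_le_of_mem_AVfam {r : ENNReal} (hdiam : ∀ U ∈ 𝓥, ediam U ≤ r)
    (hA : A ∈ AVfam 𝓥) (hB : B ∈ AVfam 𝓥) {x : X} (hx : x ∈ A) :
    infEDist x B ≤ r := by
  obtain ⟨U, hU, hxU⟩ := hA.1 hx
  obtain ⟨y, hyB, hyU⟩ := hB.2 U hU
  calc infEDist x B ≤ edist x y := infEDist_le_edist_of_mem hyB
    _ ≤ ediam U := edist_le_ediam_of_mem hxU hyU
    _ ≤ r := hdiam U hU

theorem hausdorffEDist_le_of_mem_AVfam {r : ENNReal} (hdiam : ∀ U ∈ 𝓥, ediam U ≤ r)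
    (hA : A ∈ AVfam 𝓥) (hB : B ∈ AVfam 𝓥) : hausdorffEDist A B ≤ r :=
  hausdorffEDist_le_of_infEDist (fun _ hx => infEDist_le_of_mem_AVfam hdiam hA hB hx)
    (fun _ hx => infEDist_le_of_mem_AVfam hdiam hB hA hx)

end PseudoEMetric

theorem range_mem_AVfam {X ι : Type*} {U : ι → Set X} {a : ι → X} (ha : ∀ i, a i ∈ U i) :
    Set.range a ∈ AVfam (Set.range U) :=
  ⟨Set.range_subset_iff.2 fun i => ⟨U i, ⟨i, rfl⟩, ha i⟩,
    Set.forall_mem_range.2 fun i => ⟨a i, ⟨i, rfl⟩, ha i⟩⟩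

section PseudoMetric

variable {X : Type*} [PseudoMetricSpace X]

def HasSeparatedPairs (𝓤 : Set (Set X)) : Prop :=
  ∃ (U : ℕ → Set X) (a b : ℕ → X), (∀ n, U n ∈ 𝓤 ∧ a n ∈ U n ∧ b n ∈ U n) ∧
    ∀ m n : ℕ, (n : ℝ) ≤ dist (a m) (b n)

variable {𝓤 : Set (Set X)}

theorem hasSeparatedPairs_of_anchored {p : X} {ρ : ℝ}
    (h : ∀ R : ℝ, ∃ U ∈ 𝓤, ∃ a ∈ U, ∃ b ∈ U, dist p a ≤ ρ ∧ R ≤ dist a b) :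
    HasSeparatedPairs 𝓤 := by
  choose U hU a ha b hb hpa hab using fun n : ℕ => h (n + 2 * ρ)
  refine ⟨U, a, b, fun n => ⟨hU n, ha n, hb n⟩, fun m n => ?_⟩
  have := dist_triangle4 (a n) p (a m) (b n)
  rw [dist_comm (a n) p] at this
  linarith [hpa m, hpa n, hab n]

theorem hasSeparatedPairs_of_escaping {p : X}
    (h : ∀ ρ : ℝ, ∃ U ∈ 𝓤, ∃ a ∈ U, ∃ b ∈ U, ρ ≤ dist p a ∧ ρ ≤ dist p b ∧ ρ ≤ dist a b) :
    HasSeparatedPairs 𝓤 := by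
  choose U hU a ha b hb hpa hpb hab using h
  -- `ρ n - n` bounds the distance from `p` of all earlier pairs, while the `n`-th pair lies
  -- outside the ball of radius `ρ n`.
  obtain ⟨ρ, hρ0, hρ⟩ : ∃ ρ : ℕ → ℝ, ρ 0 = 0 ∧
      ∀ n, ρ (n + 1) = max (ρ n) (max (dist p (a (ρ n))) (dist p (b (ρ n)))) + n + 1 :=
    ⟨fun n => Nat.rec 0 (fun n r => max r (max (dist p (a r)) (dist p (b r))) + n + 1) n,
      rfl, fun _ => rfl⟩
  have hmono : Monotone fun n => ρ n - n := by
    refine monotone_nat_of_le_succ fun n => ?_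
    have := le_max_left (ρ n) (max (dist p (a (ρ n))) (dist p (b (ρ n))))
    simp only [hρ, Nat.cast_succ]
    linarith [n.cast_nonneg (α := ℝ)]
  have hρn (n : ℕ) : (n : ℝ) ≤ ρ n := by
    have := hmono (Nat.zero_le n)
    simp only [hρ0, Nat.cast_zero, sub_zero] at this
    linarith
  have hearlier {m n : ℕ} (hmn : m < n) :
      dist p (a (ρ m)) ≤ ρ n - n ∧ dist p (b (ρ m)) ≤ ρ n - n := by
    have hle : ρ (m + 1) - (m + 1 : ℕ) ≤ ρ n - n := hmono hmn
    have := le_max_right (ρ m) (max (dist p (a (ρ m))) (dist p (b (ρ m))))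
    rw [hρ, Nat.cast_succ] at hle
    constructor <;> linarith [le_max_left (dist p (a (ρ m))) (dist p (b (ρ m))),
      le_max_right (dist p (a (ρ m))) (dist p (b (ρ m)))]
  refine ⟨fun n => U (ρ n), fun n => a (ρ n), fun n => b (ρ n),
    fun n => ⟨hU _, ha _, hb _⟩, fun m n => ?_⟩
  rcases lt_trichotomy m n with hmn | rfl | hnm
  · have := dist_triangle p (a (ρ m)) (b (ρ n))
    linarith [(hearlier hmn).1, hpb (ρ n)]
  · linarith [hρn m, hab (ρ m)]
  · have := dist_triangle p (b (ρ n)) (a (ρ m))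
    rw [dist_comm (b (ρ n))] at this
    have : (n : ℝ) < m := by exact_mod_cast hnm
    linarith [(hearlier hnm).2, hpa (ρ m)]

theorem hasSeparatedPairs_of_unbounded
    (h : ∀ R : ℝ, ∃ U ∈ 𝓤, ∃ a ∈ U, ∃ b ∈ U, R ≤ dist a b) : HasSeparatedPairs 𝓤 := by
  obtain ⟨-, -, p, -, -⟩ := h 0
  by_cases hesc : ∀ ρ : ℝ, ∃ U ∈ 𝓤, ∃ a ∈ U, ∃ b ∈ U,
      ρ ≤ dist p a ∧ ρ ≤ dist p b ∧ ρ ≤ dist a b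
  · exact hasSeparatedPairs_of_escaping hesc
  push Not at hesc
  obtain ⟨ρ, hρ⟩ := hesc
  refine hasSeparatedPairs_of_anchored (p := p) (ρ := ρ) fun R => ?_
  obtain ⟨U, hU, a, ha, b, hb, hab⟩ := h (max R ρ)
  by_cases hpa : dist p a < ρ
  · exact ⟨U, hU, a, ha, b, hb, hpa.le, le_of_max_le_left hab⟩
  by_cases hpb : dist p b < ρ
  · exact ⟨U, hU, b, hb, a, ha, hpb.le, dist_comm a b ▸ le_of_max_le_left hab⟩
  exact absurd (hρ U hU a ha b hb (not_lt.1 hpa) (not_lt.1 hpb))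
    (not_lt.2 (le_of_max_le_right hab))

theorem exists_ediam_le_of_forall_dist_lt {R : ℝ}
    (h : ∀ U ∈ 𝓤, ∀ a ∈ U, ∀ b ∈ U, dist a b < R) :
    ∃ R : ℝ, 0 < R ∧ ∀ U ∈ 𝓤, ediam U ≤ ENNReal.ofReal R :=
  ⟨max R 1, lt_max_of_lt_right one_pos, fun U hU => ediam_le fun a ha b hb => by
    rw [edist_dist]
    exact ENNReal.ofReal_le_ofReal ((h U hU a ha b hb).le.trans (le_max_left R 1))⟩

end PseudoMetric

section Metric

variable {X : Type*} [MetricSpace X] {𝓤 : Set (Set X)}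

theorem LSRUnifBounded_Cd_of_ediam_le {R : ℝ} (hR : 0 < R)
    (hdiam : ∀ U ∈ 𝓤, ediam U ≤ ENNReal.ofReal R) : LSRUnifBounded (Cd X) 𝓤 :=
  fun _ h𝓥 _ => ⟨R, hR, fun _ hA _ hB =>
    hausdorffEDist_le_of_mem_AVfam (fun U hU => hdiam U (h𝓥 hU)) hA hB⟩

theorem not_LSRUnifBounded_Cd_of_hasSeparatedPairs (h : HasSeparatedPairs 𝓤) :
    ¬ LSRUnifBounded (Cd X) 𝓤 := by
  intro hLSR
  obtain ⟨U, a, b, hmem, hsep⟩ := h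
  obtain ⟨k, hk, hbound⟩ := hLSR (Set.range U)
    (Set.range_subset_iff.2 fun n => (hmem n).1) (Set.range_nonempty U)
  obtain ⟨n, hn⟩ := exists_nat_gt k
  have hfar : ENNReal.ofReal n ≤ infEDist (b n) (Set.range a) :=
    le_infEDist.2 <| Set.forall_mem_range.2 fun m => by
      rw [edist_dist, dist_comm]
      exact ENNReal.ofReal_le_ofReal (hsep m n)
  have hnear : infEDist (b n) (Set.range a) ≤ ENNReal.ofReal k :=
    (infEDist_le_hausdorffEDist_of_mem (Set.mem_range_self n)).trans
      (hbound _ (range_mem_AVfam fun n => (hmem n).2.2) _ (range_mem_AVfam fun n => (hmem n).2.1))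
  have := hfar.trans hnear
  rw [ENNReal.ofReal_le_ofReal_iff hk.le] at this
  linarith

end Metric

theorem stmt14 {X : Type*} [MetricSpace X] (𝓤 : Set (Set X)) :
    LSRUnifBounded (Cd X) 𝓤 ↔
      ∃ R : ℝ, 0 < R ∧ ∀ U ∈ 𝓤, EMetric.diam U ≤ ENNReal.ofReal R := by
  refine ⟨fun hLSR => ?_, fun ⟨R, hR, hdiam⟩ => LSRUnifBounded_Cd_of_ediam_le hR hdiam⟩
  by_contra hdiam
  refine not_LSRUnifBounded_Cd_of_hasSeparatedPairs
    (hasSeparatedPairs_of_unbounded fun R => ?_) hLSR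
  by_contra! hR
  exact hdiam (exists_ediam_le_of_forall_dist_lt hR)
end

section
/- If (X, 𝔠) and (Y, 𝔠') are large scale equivalent LS.R spaces, then asdim_𝔠 X = asdim_{𝔠'} Y. -/
def Refines {X : Type*} (𝓤 𝓥 : Set (Set X)) : Prop := ∀ U ∈ 𝓤, ∃ V ∈ 𝓥, U ⊆ V

def MultLE {X : Type*} (𝓥 : Set (Set X)) (m : ℕ) : Prop :=
  ∀ x : X, {V | V ∈ 𝓥 ∧ x ∈ V}.Finite ∧ {V | V ∈ 𝓥 ∧ x ∈ V}.ncard ≤ m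

def asdimLE {X : Type*} (𝔠 : Set (Set (Set X))) (n : ℕ) : Prop :=
  ∀ 𝓤 : Set (Set X), LSRUnifBounded 𝔠 𝓤 → ⋃₀ 𝓤 = Set.univ →
    ∃ 𝓥 : Set (Set X), LSRUnifBounded 𝔠 𝓥 ∧ ⋃₀ 𝓥 = Set.univ ∧ Refines 𝓤 𝓥 ∧ MultLE 𝓥 (n + 1)

def ImFam {X Y : Type*} (f : X → Y) (𝓐 : Set (Set X)) : Set (Set Y) :=
  (Set.image f) '' 𝓐

def IsLSRMap {X Y : Type*} (𝔠 : Set (Set (Set X))) (𝔠' : Set (Set (Set Y)))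
    (f : X → Y) : Prop :=
  (∀ B : Set Y, LSRBounded 𝔠' B → LSRBounded 𝔠 (f ⁻¹' B)) ∧
  ∀ 𝓐 ∈ 𝔠, ImFam f 𝓐 ∈ 𝔠'

def IsLSEquiv {X Y : Type*} (𝔠 : Set (Set (Set X))) (𝔠' : Set (Set (Set Y)))
    (f : X → Y) : Prop :=
  IsLSRMap 𝔠 𝔠' f ∧ ∃ g : Y → X, IsLSRMap 𝔠' 𝔠 g ∧
    (∀ 𝓐 : Set (Set X), ImFam (g ∘ f) 𝓐 ∈ 𝔠 → ImFam (g ∘ f) 𝓐 ∪ 𝓐 ∈ 𝔠) ∧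
    (∀ 𝓑 : Set (Set Y), ImFam (f ∘ g) 𝓑 ∈ 𝔠' → ImFam (f ∘ g) 𝓑 ∪ 𝓑 ∈ 𝔠')

section Aux

variable {X Y Z : Type*}

lemma imFam_comp (f : X → Y) (g : Y → Z) (𝓐 : Set (Set X)) :
    ImFam (g ∘ f) 𝓐 = ImFam g (ImFam f 𝓐) := by
  ext C
  constructor
  · rintro ⟨A, hA, rfl⟩
    exact ⟨f '' A, ⟨A, hA, rfl⟩, (Set.image_comp g f A).symm⟩
  · rintro ⟨-, ⟨A, hA, rfl⟩, rfl⟩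
    exact ⟨A, hA, Set.image_comp g f A⟩

lemma ub_union {𝔠 : Set (Set (Set X))} (h : IsLSR 𝔠) {𝓐 𝓑 : Set (Set X)}
    (hA : LSRUnifBounded 𝔠 𝓐) (hB : LSRUnifBounded 𝔠 𝓑) :
    LSRUnifBounded 𝔠 (𝓐 ∪ 𝓑) := by
  intro 𝓥 hsub hne
  by_cases h2 : (𝓥 \ 𝓐).Nonempty
  · by_cases h1 : (𝓥 ∩ 𝓐).Nonempty
    · have m1 := hA (𝓥 ∩ 𝓐) Set.inter_subset_right h1
      have m2 := hB (𝓥 \ 𝓐) (fun V hV => (hsub hV.1).resolve_left hV.2) h2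
      refine h.subfamily (h.vee_mem m1 m2) ?_
      rintro A ⟨hA1, hA2⟩
      refine ⟨A ∩ ⋃₀ (𝓥 ∩ 𝓐), ⟨Set.inter_subset_right, ?_⟩,
             A ∩ ⋃₀ (𝓥 \ 𝓐), ⟨Set.inter_subset_right, ?_⟩, ?_⟩
      · intro U hU
        obtain ⟨x, hxA, hxU⟩ := hA2 U hU.1
        exact ⟨x, ⟨hxA, ⟨U, hU, hxU⟩⟩, hxU⟩
      · intro U hU
        obtain ⟨x, hxA, hxU⟩ := hA2 U hU.1
        exact ⟨x, ⟨hxA, ⟨U, hU, hxU⟩⟩, hxU⟩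
      · ext x
        constructor
        · intro hx
          obtain ⟨U, hU, hxU⟩ := hA1 hx
          by_cases hUA : U ∈ 𝓐
          · exact Or.inl ⟨hx, U, ⟨hU, hUA⟩, hxU⟩
          · exact Or.inr ⟨hx, U, ⟨hU, hUA⟩, hxU⟩
        · rintro (⟨hx, -⟩ | ⟨hx, -⟩) <;> exact hx
    · have hsB : 𝓥 ⊆ 𝓑 := by
        intro V hV
        rcases hsub hV with hVA | hVB
        · exact absurd ⟨V, hV, hVA⟩ h1
        · exact hVB
      exact hB 𝓥 hsB hne
  · have hsA : 𝓥 ⊆ 𝓐 := fun V hV => by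
      by_contra hVA; exact h2 ⟨V, hV, hVA⟩
    exact hA 𝓥 hsA hne

lemma ub_image {𝔠 : Set (Set (Set X))} {𝔠' : Set (Set (Set Y))} (hY : IsLSR 𝔠')
    {f : X → Y} (hf2 : ∀ 𝓐 ∈ 𝔠, ImFam f 𝓐 ∈ 𝔠') {𝓤 : Set (Set X)}
    (hU : LSRUnifBounded 𝔠 𝓤) : LSRUnifBounded 𝔠' (ImFam f 𝓤) := by
  intro 𝓥' hsub hne
  set 𝓥 : Set (Set X) := {U | U ∈ 𝓤 ∧ f '' U ∈ 𝓥'} with h𝓥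
  have h𝓥ne : 𝓥.Nonempty := by
    obtain ⟨W, hW⟩ := hne
    obtain ⟨U, hU', rfl⟩ := hsub hW
    exact ⟨U, hU', hW⟩
  have hAV : AVfam 𝓥 ∈ 𝔠 := hU 𝓥 (fun U h => h.1) h𝓥ne
  refine hY.subfamily (hf2 _ hAV) ?_
  rintro A' ⟨hA'1, hA'2⟩
  refine ⟨f ⁻¹' A' ∩ ⋃₀ 𝓥, ⟨Set.inter_subset_right, ?_⟩, ?_⟩
  · intro U hUm
    obtain ⟨a, haA, haU⟩ := hA'2 (f '' U) hUm.2
    obtain ⟨u, huU, hua⟩ := haU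
    exact ⟨u, ⟨(by rw [Set.mem_preimage, hua]; exact haA), ⟨U, hUm, huU⟩⟩, huU⟩
  · apply Set.Subset.antisymm
    · rintro y ⟨x, ⟨hx1, -⟩, rfl⟩
      exact hx1
    · intro a haA
      obtain ⟨W, hW, haW⟩ := hA'1 haA
      obtain ⟨U, hUm, rfl⟩ := hsub hW
      have hU𝓥 : U ∈ 𝓥 := ⟨hUm, hW⟩
      obtain ⟨u, huU, rfl⟩ := haW
      exact ⟨u, ⟨haA, ⟨U, hU𝓥, huU⟩⟩, rfl⟩

lemma ub_preimage {𝔠 : Set (Set (Set X))} {𝔠' : Set (Set (Set Y))}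
    (hX : IsLSR 𝔠) (hY : IsLSR 𝔠') {f : X → Y} {g : Y → X}
    (hg2 : ∀ 𝓑 ∈ 𝔠', ImFam g 𝓑 ∈ 𝔠)
    (c1 : ∀ 𝓐 : Set (Set X), ImFam (g ∘ f) 𝓐 ∈ 𝔠 → ImFam (g ∘ f) 𝓐 ∪ 𝓐 ∈ 𝔠)
    {𝓤' : Set (Set Y)} (hU' : LSRUnifBounded 𝔠' 𝓤') :
    LSRUnifBounded 𝔠 (Set.preimage f '' 𝓤') := by
  intro 𝓥 hsub hne
  set 𝓦 : Set (Set Y) := {U' | U' ∈ 𝓤' ∧ f ⁻¹' U' ∈ 𝓥} with h𝓦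
  have h𝓦ne : 𝓦.Nonempty := by
    obtain ⟨V, hV⟩ := hne
    obtain ⟨U', hU'm, rfl⟩ := hsub hV
    exact ⟨U', hU'm, hV⟩
  have hAVW : AVfam 𝓦 ∈ 𝔠' := hU' 𝓦 (fun u h => h.1) h𝓦ne
  have hsub2 : ImFam f (AVfam 𝓥) ⊆ AVfam 𝓦 := by
    rintro _ ⟨A, ⟨hA1, hA2⟩, rfl⟩
    constructor
    · rintro _ ⟨a, haA, rfl⟩
      obtain ⟨V, hV, haV⟩ := hA1 haA
      obtain ⟨U', hU'm, rfl⟩ := hsub hV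
      exact ⟨U', ⟨hU'm, hV⟩, haV⟩
    · intro U' hU'w
      obtain ⟨a, haA, haU⟩ := hA2 (f ⁻¹' U') hU'w.2
      exact ⟨f a, ⟨a, haA, rfl⟩, haU⟩
  have h1 : ImFam f (AVfam 𝓥) ∈ 𝔠' := hY.subfamily hAVW hsub2
  have h2 : ImFam (g ∘ f) (AVfam 𝓥) ∈ 𝔠 := by
    rw [imFam_comp]; exact hg2 _ h1
  exact hX.subfamily (c1 _ h2) Set.subset_union_right

lemma asdim_dir {𝔠 : Set (Set (Set X))} {𝔠' : Set (Set (Set Y))}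
    (hX : IsLSR 𝔠) (hY : IsLSR 𝔠') (f : X → Y) (hf : IsLSEquiv 𝔠 𝔠' f)
    (n : ℕ) (hdim : asdimLE 𝔠 n) : asdimLE 𝔠' n := by
  obtain ⟨⟨-, hf2⟩, g, ⟨-, hg2⟩, c1, c2⟩ := hf
  intro 𝓤' hub' hcov'
  have hub𝓕 : LSRUnifBounded 𝔠 (Set.preimage f '' 𝓤') := ub_preimage hX hY hg2 c1 hub'
  have hub𝓖 : LSRUnifBounded 𝔠 (ImFam g 𝓤') := ub_image hX hg2 hub'
  have hubU := ub_union hX hub𝓕 hub𝓖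
  have hcovU : ⋃₀ (Set.preimage f '' 𝓤' ∪ ImFam g 𝓤') = Set.univ := by
    apply Set.eq_univ_of_forall
    intro x
    have hx : f x ∈ ⋃₀ 𝓤' := by rw [hcov']; trivial
    obtain ⟨U', hU'm, hfx⟩ := hx
    exact ⟨f ⁻¹' U', Or.inl ⟨U', hU'm, rfl⟩, hfx⟩
  obtain ⟨𝓥, hub𝓥, hcov𝓥, href, hmult⟩ := hdim _ hubU hcovU
  have hch : ∀ U' : Set Y, ∃ V : Set X, U' ∈ 𝓤' → V ∈ 𝓥 ∧ g '' U' ⊆ V := by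
    intro U'
    by_cases hm : U' ∈ 𝓤'
    · obtain ⟨V, hV, hVs⟩ := href (g '' U') (Or.inr ⟨U', hm, rfl⟩)
      exact ⟨V, fun _ => ⟨hV, hVs⟩⟩
    · exact ⟨∅, fun hmm => absurd hmm hm⟩
  choose h hh using hch
  set Wmap : Set X → Set Y := fun V => ⋃₀ {U' | U' ∈ 𝓤' ∧ h U' = V} with hWmap
  refine ⟨Wmap '' 𝓥, ?_, ?_, ?_, ?_⟩
  · -- uniformly bounded
    intro 𝓩 h𝓩sub h𝓩ne
    have hkch : ∀ W : Set Y, ∃ V : Set X, W ∈ 𝓩 → V ∈ 𝓥 ∧ Wmap V = W := by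
      intro W
      by_cases hm : W ∈ 𝓩
      · obtain ⟨V, hV, hVW⟩ := h𝓩sub hm
        exact ⟨V, fun _ => ⟨hV, hVW⟩⟩
      · exact ⟨∅, fun hmm => absurd hmm hm⟩
    choose k hk using hkch
    have h𝓥₀sub : k '' 𝓩 ⊆ 𝓥 := by
      rintro _ ⟨W, hW, rfl⟩; exact (hk W hW).1
    have h𝓥₀ne : (k '' 𝓩).Nonempty := h𝓩ne.image k
    have hAV₀ : AVfam (k '' 𝓩) ∈ 𝔠 := hub𝓥 _ h𝓥₀sub h𝓥₀ne
    have hkey : ImFam g (AVfam 𝓩) ⊆ AVfam (k '' 𝓩) := by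
      rintro _ ⟨A, ⟨hA1, hA2⟩, rfl⟩
      constructor
      · rintro _ ⟨a, haA, rfl⟩
        obtain ⟨W, hWm, haW⟩ := hA1 haA
        have hkW := hk W hWm
        rw [← hkW.2] at haW
        obtain ⟨U', hU'p, haU'⟩ := haW
        refine ⟨k W, ⟨W, hWm, rfl⟩, ?_⟩
        have hga := (hh U' hU'p.1).2 ⟨a, haU', rfl⟩
        rwa [hU'p.2] at hga
      · intro V hVm
        obtain ⟨W, hWm, rfl⟩ := hVm
        obtain ⟨a, haA, haW⟩ := hA2 W hWm
        have hkW := hk W hWm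
        rw [← hkW.2] at haW
        obtain ⟨U', hU'p, haU'⟩ := haW
        have hga := (hh U' hU'p.1).2 ⟨a, haU', rfl⟩
        rw [hU'p.2] at hga
        exact ⟨g a, ⟨a, haA, rfl⟩, hga⟩
    have h1 : ImFam g (AVfam 𝓩) ∈ 𝔠 := hX.subfamily hAV₀ hkey
    have h2 : ImFam (f ∘ g) (AVfam 𝓩) ∈ 𝔠' := by
      rw [imFam_comp]; exact hf2 _ h1
    exact hY.subfamily (c2 _ h2) Set.subset_union_right
  · -- cover
    apply Set.eq_univ_of_forall
    intro y
    have hy : y ∈ ⋃₀ 𝓤' := by rw [hcov']; trivial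
    obtain ⟨U', hU'm, hyU⟩ := hy
    exact ⟨Wmap (h U'), ⟨h U', (hh U' hU'm).1, rfl⟩, ⟨U', ⟨hU'm, rfl⟩, hyU⟩⟩
  · -- refines
    intro U' hU'm
    exact ⟨Wmap (h U'), ⟨h U', (hh U' hU'm).1, rfl⟩, fun y hy => ⟨U', ⟨hU'm, rfl⟩, hy⟩⟩
  · -- multiplicity
    intro y
    obtain ⟨hfin, hcard⟩ := hmult (g y)
    have hsubT : {W | W ∈ Wmap '' 𝓥 ∧ y ∈ W} ⊆ Wmap '' {V | V ∈ 𝓥 ∧ g y ∈ V} := by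
      rintro W ⟨⟨V, hV, rfl⟩, hyW⟩
      obtain ⟨U', hU'p, hyU⟩ := hyW
      have hgyV : g y ∈ V := by
        have hga := (hh U' hU'p.1).2 ⟨y, hyU, rfl⟩
        rwa [hU'p.2] at hga
      exact ⟨V, ⟨hV, hgyV⟩, rfl⟩
    refine ⟨(hfin.image Wmap).subset hsubT, ?_⟩
    calc {W | W ∈ Wmap '' 𝓥 ∧ y ∈ W}.ncard
        ≤ (Wmap '' {V | V ∈ 𝓥 ∧ g y ∈ V}).ncard :=
          Set.ncard_le_ncard hsubT (hfin.image _)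
      _ ≤ {V | V ∈ 𝓥 ∧ g y ∈ V}.ncard := Set.ncard_image_le hfin
      _ ≤ n + 1 := hcard

end Aux

theorem stmt16 {X Y : Type*} (𝔠 : Set (Set (Set X))) (𝔠' : Set (Set (Set Y)))
    (hX : IsLSR 𝔠) (hY : IsLSR 𝔠') (f : X → Y) (hf : IsLSEquiv 𝔠 𝔠' f) :
    ∀ n : ℕ, asdimLE 𝔠 n ↔ asdimLE 𝔠' n := by
  intro n
  obtain ⟨hfm, g, hgm, c1, c2⟩ := hf
  constructor
  · exact asdim_dir hX hY f ⟨hfm, g, hgm, c1, c2⟩ n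
  · exact asdim_dir hY hX g ⟨hgm, f, hfm, c2, c1⟩ n
end

section
/- Let X = ℕ with the discrete topology, Y its one-point compactification, and 𝔠 = C_Y the LS.R given by: A ∈ 𝔠 iff all members of A are finite or all are infinite. Then asdim_𝔠 X = 1. -/
def cOnePoint : Set (Set (Set ℕ)) :=
  {𝓐 | (∀ A ∈ 𝓐, A.Finite) ∨ (∀ A ∈ 𝓐, A.Infinite)}

lemma ub_of (𝓤 : Set (Set ℕ)) (hfin : ∀ U ∈ 𝓤, U.Finite)
    (hpf : ∀ x : ℕ, {U | U ∈ 𝓤 ∧ x ∈ U}.Finite) : LSRUnifBounded cOnePoint 𝓤 := by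
  intro 𝓥 h𝓥 _
  by_cases hVfin : 𝓥.Finite
  · left
    intro A hA
    exact ((hVfin.sUnion (fun s hs => hfin s (h𝓥 hs)))).subset hA.1
  · right
    intro A hA hAfin
    have hsub : 𝓥 ⊆ ⋃ x ∈ A, {U | U ∈ 𝓤 ∧ x ∈ U} := by
      intro V hV
      obtain ⟨x, hxA, hxV⟩ := hA.2 V hV
      exact Set.mem_biUnion hxA ⟨h𝓥 hV, hxV⟩
    exact hVfin ((hAfin.biUnion (fun x _ => hpf x)).subset hsub)

lemma ub_members_finite {𝓤 : Set (Set ℕ)} (h : LSRUnifBounded cOnePoint 𝓤)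
    {U : Set ℕ} (hU : U ∈ 𝓤) : U.Finite := by
  by_contra hUinf
  have hUne : U.Nonempty := Set.Infinite.nonempty hUinf
  obtain ⟨x, hx⟩ := hUne
  rcases h {U} (by simpa using hU) ⟨U, rfl⟩ with hL | hR
  · refine hUinf (hL U ⟨by simp, ?_⟩)
    intro V hV
    rw [Set.mem_singleton_iff] at hV
    subst hV
    exact ⟨x, hx, hx⟩
  · refine hR {x} ⟨?_, ?_⟩ (Set.finite_singleton x)
    · rw [Set.sUnion_singleton]
      exact Set.singleton_subset_iff.mpr hx
    · intro V hV
      rw [Set.mem_singleton_iff] at hV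
      subst hV
      exact ⟨x, rfl, hx⟩

lemma ub_pointFinite {𝓤 : Set (Set ℕ)} (h : LSRUnifBounded cOnePoint 𝓤)
    (x : ℕ) : {U | U ∈ 𝓤 ∧ x ∈ U}.Finite := by
  by_contra hinf
  set 𝓥 : Set (Set ℕ) := {U | U ∈ 𝓤 ∧ x ∈ U} with h𝓥def
  obtain ⟨W, hW⟩ : 𝓥.Nonempty := Set.Infinite.nonempty hinf
  rcases h 𝓥 (fun V hV => hV.1) ⟨W, hW⟩ with hL | hR
  · have hU𝓥 : (⋃₀ 𝓥).Finite := by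
      refine hL _ ⟨subset_rfl, ?_⟩
      intro V hV
      exact ⟨x, Set.mem_sUnion.mpr ⟨V, hV, hV.2⟩, hV.2⟩
    exact hinf (hU𝓥.finite_subsets.subset (fun V hV => Set.subset_sUnion_of_mem hV))
  · refine hR {x} ⟨?_, ?_⟩ (Set.finite_singleton x)
    · exact Set.singleton_subset_iff.mpr (Set.mem_sUnion.mpr ⟨W, hW, hW.2⟩)
    · intro V hV
      exact ⟨x, rfl, hV.2⟩

lemma part_two : ¬ asdimLE cOnePoint 0 := by
  intro h
  set 𝓤 : Set (Set ℕ) := Set.range (fun n => ({n, n+1} : Set ℕ)) with h𝓤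
  have hub : LSRUnifBounded cOnePoint 𝓤 := by
    refine ub_of _ ?_ ?_
    · rintro U ⟨n, rfl⟩
      exact (Set.finite_singleton _).insert n
    · intro x
      have hsub : {U | U ∈ 𝓤 ∧ x ∈ U} ⊆ (fun n => ({n, n+1} : Set ℕ)) '' {x - 1, x} := by
        rintro U ⟨⟨n, rfl⟩, hxU⟩
        have hx : x = n ∨ x = n + 1 := by simpa using hxU
        refine ⟨n, ?_, rfl⟩
        rcases hx with h | h <;> simp [h]
      exact (((Set.finite_singleton x).insert (x-1)).image _).subset hsub
  have hcov : ⋃₀ 𝓤 = Set.univ := by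
    refine Set.eq_univ_of_forall (fun x => ?_)
    exact Set.mem_sUnion.mpr ⟨{x, x+1}, ⟨x, rfl⟩, by simp⟩
  obtain ⟨𝓥, hubV, hcovV, href, hmult⟩ := h 𝓤 hub hcov
  have hex : ∀ n : ℕ, ∃ V ∈ 𝓥, ({n, n+1} : Set ℕ) ⊆ V := fun n => href _ ⟨n, rfl⟩
  choose V hV𝓥 hVsub using hex
  have heq : ∀ n, V (n+1) = V n := by
    intro n
    have h1 : V n ∈ {W | W ∈ 𝓥 ∧ (n+1) ∈ W} := ⟨hV𝓥 n, hVsub n (by simp)⟩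
    have h2 : V (n+1) ∈ {W | W ∈ 𝓥 ∧ (n+1) ∈ W} := ⟨hV𝓥 (n+1), hVsub (n+1) (by simp)⟩
    obtain ⟨hfin, hcard⟩ := hmult (n+1)
    exact (Set.ncard_le_one hfin).mp hcard _ h2 _ h1
  have hVeq : ∀ n, V n = V 0 := by
    intro n
    induction n with
    | zero => rfl
    | succ k ih => rw [heq k, ih]
  have hmem : ∀ n, n ∈ V 0 := fun n => by rw [← hVeq n]; exact hVsub n (by simp)
  have hfinV := ub_members_finite hubV (hV𝓥 0)
  have huniv : V 0 = Set.univ := Set.eq_univ_of_forall hmem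
  rw [huniv] at hfinV
  exact Set.infinite_univ hfinV

lemma part_one : asdimLE cOnePoint 1 := by
  intro 𝓤 hub hcov
  have hfin : ∀ U ∈ 𝓤, U.Finite := fun U hU => ub_members_finite hub hU
  have hpf : ∀ x : ℕ, {U | U ∈ 𝓤 ∧ x ∈ U}.Finite := ub_pointFinite hub
  -- T n : the points of members of 𝓤 meeting [0,n], plus n itself
  set T : ℕ → Set ℕ :=
    fun n => insert n (⋃₀ {U | U ∈ 𝓤 ∧ (U ∩ Set.Iic n).Nonempty}) with hT
  have hTfin : ∀ n, (T n).Finite := by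
    intro n
    refine (Set.Finite.sUnion ?_ (fun s hs => hfin s hs.1)).insert n
    refine ((Set.finite_Iic n).biUnion (fun x _ => hpf x)).subset ?_
    rintro U ⟨hU, x, hxU, hxn⟩
    exact Set.mem_biUnion hxn ⟨hU, hxU⟩
  set H : ℕ → ℕ := fun n => sSup (T n) with hH
  have hmemT : ∀ n y, y ∈ T n → y ≤ H n :=
    fun n y hy => le_csSup (hTfin n).bddAbove hy
  have hnH : ∀ n, n ≤ H n := fun n => hmemT n n (Set.mem_insert n _)
  have hkey : ∀ n, ∀ U ∈ 𝓤, ∀ m ∈ U, m ≤ n → ∀ x ∈ U, x ≤ H n := by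
    intro n U hU m hm hmn x hx
    exact hmemT n x (Set.mem_insert_of_mem _ ⟨U, ⟨hU, m, hm, hmn⟩, hx⟩)
  have hHmono : ∀ ⦃n n' : ℕ⦄, n ≤ n' → H n ≤ H n' := by
    intro n n' hnn'
    refine csSup_le ⟨n, Set.mem_insert n _⟩ ?_
    rintro y (rfl | ⟨U, ⟨hU, m, hm, hmn⟩, hyU⟩)
    · exact le_trans hnn' (hnH n')
    · exact hmemT n' y (Set.mem_insert_of_mem _ ⟨U, ⟨hU, m, hm, le_trans hmn hnn'⟩, hyU⟩)
  -- the sequence a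
  set a : ℕ → ℕ := fun k => Nat.rec 0 (fun _ prev => H prev + 1) k with ha
  have ha0 : a 0 = 0 := rfl
  have haS : ∀ k, a (k+1) = H (a k) + 1 := fun k => rfl
  have hamono : StrictMono a := by
    refine strictMono_nat_of_lt_succ (fun k => ?_)
    rw [haS k]
    exact Nat.lt_succ_of_le (hnH (a k))
  have hka : ∀ k, k ≤ a k := fun k => hamono.le_apply
  -- k0 x : the greatest k with a k ≤ x
  set k0 : ℕ → ℕ := fun x => Nat.findGreatest (fun k => a k ≤ x) x with hk0
  have hk0le : ∀ x, a (k0 x) ≤ x := by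
    intro x
    exact Nat.findGreatest_spec (P := fun k => a k ≤ x) (Nat.zero_le x)
      (by show a 0 ≤ x; rw [ha0]; exact Nat.zero_le x)
  have hk0lt : ∀ x, x < a (k0 x + 1) := by
    intro x
    by_contra hcon
    push_neg at hcon
    exact Nat.findGreatest_is_greatest (Nat.lt_succ_self _)
      (le_trans (hka _) hcon) hcon
  have hk0ge : ∀ x k, a k ≤ x → k ≤ k0 x :=
    fun x k hk => Nat.le_findGreatest (le_trans (hka k) hk) hk
  set 𝓥 : Set (Set ℕ) := Set.range (fun k => Set.Ico (a k) (a (k+2))) with h𝓥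
  have hpair : ∀ x, {V | V ∈ 𝓥 ∧ x ∈ V} ⊆
      (fun k => Set.Ico (a k) (a (k+2))) '' {k0 x - 1, k0 x} := by
    intro x
    rintro V ⟨⟨k, rfl⟩, hxV⟩
    obtain ⟨hk1, hk2⟩ := hxV
    have hle : k ≤ k0 x := hk0ge x k hk1
    have hge : k0 x ≤ k + 1 := by
      by_contra hcon
      push_neg at hcon
      exact absurd (le_trans (hamono.monotone hcon) (hk0le x)) (not_le.mpr hk2)
    refine ⟨k, ?_, rfl⟩
    have : k = k0 x - 1 ∨ k = k0 x := by omega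
    rcases this with h | h <;> simp [h]
  refine ⟨𝓥, ?_, ?_, ?_, ?_⟩
  · refine ub_of _ ?_ ?_
    · rintro V ⟨k, rfl⟩
      exact Set.finite_Ico _ _
    · intro x
      exact (((Set.finite_singleton (k0 x)).insert _).image _).subset (hpair x)
  · refine Set.eq_univ_of_forall (fun x => ?_)
    refine Set.mem_sUnion.mpr ⟨Set.Ico (a (k0 x)) (a (k0 x + 2)), ⟨k0 x, rfl⟩, ?_⟩
    exact ⟨hk0le x, lt_of_lt_of_le (hk0lt x) (hamono.monotone (show k0 x + 1 ≤ k0 x + 2 by omega))⟩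
  · intro U hU
    rcases U.eq_empty_or_nonempty with rfl | hUne
    · exact ⟨Set.Ico (a 0) (a 2), ⟨0, rfl⟩, Set.empty_subset _⟩
    · set m := sInf U with hm
      have hmU : m ∈ U := Nat.sInf_mem hUne
      refine ⟨Set.Ico (a (k0 m)) (a (k0 m + 2)), ⟨k0 m, rfl⟩, ?_⟩
      intro x hx
      constructor
      · exact le_trans (hk0le m) (Nat.sInf_le hx)
      · have hmH : m ≤ H (a (k0 m)) := by
          have := hk0lt m
          rw [haS] at this
          omega
        have hx1 : x ≤ H (H (a (k0 m))) := hkey _ U hU m hmU hmH x hx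
        have hx2 : H (H (a (k0 m))) ≤ H (a (k0 m + 1)) := by
          refine hHmono ?_
          rw [haS]
          omega
        have h3 : a (k0 m + 1 + 1) = H (a (k0 m + 1)) + 1 := haS (k0 m + 1)
        have h4 : a (k0 m + 2) = a (k0 m + 1 + 1) := congrArg a (show k0 m + 2 = k0 m + 1 + 1 by omega)
        omega
  · intro x
    have hfinP := (((Set.finite_singleton (k0 x)).insert _).image
      (fun k => Set.Ico (a k) (a (k+2)))).subset (hpair x)
    refine ⟨hfinP, ?_⟩
    calc {V | V ∈ 𝓥 ∧ x ∈ V}.ncard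
        ≤ ((fun k => Set.Ico (a k) (a (k+2))) '' {k0 x - 1, k0 x}).ncard :=
          Set.ncard_le_ncard (hpair x) (((Set.finite_singleton (k0 x)).insert _).image _)
      _ ≤ ({k0 x - 1, k0 x} : Set ℕ).ncard :=
          Set.ncard_image_le ((Set.finite_singleton (k0 x)).insert _)
      _ ≤ 1 + 1 := by
          refine le_trans (Set.ncard_insert_le _ _) ?_
          simp [Set.ncard_singleton]

theorem stmt17 : asdimLE cOnePoint 1 ∧ ¬ asdimLE cOnePoint 0 := ⟨part_one, part_two⟩
end

section
/- Let X = ℕ and let E be the coarse structure of all E ⊆ ℕ×ℕ such that for some n, E(x) and E^{-1}(x) have at most n elements for all x. Let 𝔠 = C_E and λ_𝔠 the induced AS.R (A λ_𝔠 B iff both belong to a common member of 𝔠; equivalently A and B are both finite or both infinite). Then the family U = {Uᵢ : i ∈ ℕ} with Uᵢ = {i, i+1, …, 2i} is uniformly bounded in the AS.R space (ℕ, λ_𝔠) but is not uniformly bounded in the LS.R space (ℕ, 𝔠); in particular the converse of the statement 'uniformly bounded in (X,𝔠) implies uniformly bounded in (X,λ_𝔠)' fails. -/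
def otimesFam {X : Type*} (𝓤 : Set (Set X)) : Set (X × X) :=
  {p | ∃ U ∈ 𝓤, p.1 ∈ U ∧ p.2 ∈ U}

def ASRUnifBounded {X : Type*} (l : Set X → Set X → Prop) (𝓤 : Set (Set X)) : Prop :=
  ∀ A B : Set X, A ⊆ relImage (otimesFam 𝓤) B → B ⊆ relImage (otimesFam 𝓤) A → l A B

def Ebdd : Set (Set (ℕ × ℕ)) :=
  {E | ∃ n : ℕ, ∀ x : ℕ,
    ({y | (x, y) ∈ E}.Finite ∧ {y | (x, y) ∈ E}.ncard ≤ n) ∧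
    ({y | (y, x) ∈ E}.Finite ∧ {y | (y, x) ∈ E}.ncard ≤ n)}

def Ufam : Set (Set ℕ) := {U | ∃ i : ℕ, U = Set.Icc i (2 * i)}

/-!
Two sets are λ-related as soon as some bounded relation maps each of them into the other and into
itself. For finite nonempty `A, B` the square of `A ∪ B` does this; for infinite `A, B` a bijection
`A ≃ B`, its inverse and the diagonal do. Since every `Uᵢ` lies in `[0, 2i]`, a finite set has a
finite `⊗_U`-image, so the hypotheses of AS.R-boundedness force `A` and `B` to be both empty, both
finite nonempty, or both infinite.

For the LS.R part, suppose `E` with in- and out-degrees at most `n` witnesses `A_U ∈ 𝔠`. Pick `x`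
outside the `E`-images of `0, …, n - 1`. Then `Uᵢ` meets the complement of `E⁻¹(x)`: in `i` if
`i < n`, and by counting (`Uᵢ` has `i + 1` elements) otherwise; and a transversal made of such points is a member of `A_U` whose `E`-image misses
`x`, whereas `ℕ ∈ A_U`.
-/

open Set

section General

variable {X : Type*}

theorem nonempty_of_subset_relImage {E : Set (X × X)} {A B : Set X}
    (h : A ⊆ relImage E B) (hA : A.Nonempty) : B.Nonempty :=
  let ⟨_, ha⟩ := hA
  let ⟨b, hb, _⟩ := h ha
  ⟨b, hb⟩

theorem subset_relImage_prod_self {S C D : Set X} (hC : C ⊆ S) (hD : D ⊆ S)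
    (hCD : C.Nonempty → D.Nonempty) : C ⊆ relImage (S ×ˢ S) D := fun c hc =>
  let ⟨d, hd⟩ := hCD ⟨c, hc⟩
  ⟨d, hd, hD hd, hC hc⟩

theorem exists_mem_CofE_of_subset_relImage {𝓔 : Set (Set (X × X))} {E : Set (X × X)}
    {A B : Set X} (hE : E ∈ 𝓔) (hAA : A ⊆ relImage E A) (hAB : A ⊆ relImage E B)
    (hBA : B ⊆ relImage E A) (hBB : B ⊆ relImage E B) :
    ∃ 𝓐 ∈ CofE 𝓔, A ∈ 𝓐 ∧ B ∈ 𝓐 := by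
  refine ⟨{A, B}, ⟨E, hE, ?_⟩, Or.inl rfl, Or.inr rfl⟩
  rintro _ (rfl | rfl) _ (rfl | rfl) <;> assumption

end General

section BoundedGeometry

theorem union_mem_Ebdd {E F : Set (ℕ × ℕ)} (hE : E ∈ Ebdd) (hF : F ∈ Ebdd) : E ∪ F ∈ Ebdd := by
  obtain ⟨m, hm⟩ := hE
  obtain ⟨n, hn⟩ := hF
  have key : ∀ s t : Set ℕ, s.Finite ∧ s.ncard ≤ m → t.Finite ∧ t.ncard ≤ n →
      (s ∪ t).Finite ∧ (s ∪ t).ncard ≤ m + n := fun s t hs ht =>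
    ⟨hs.1.union ht.1, (ncard_union_le s t).trans (add_le_add hs.2 ht.2)⟩
  exact ⟨m + n, fun x => ⟨key _ _ (hm x).1 (hn x).1, key _ _ (hm x).2 (hn x).2⟩⟩

theorem mem_Ebdd_of_subsingleton {E : Set (ℕ × ℕ)} (hout : ∀ x, {y | (x, y) ∈ E}.Subsingleton)
    (hin : ∀ x, {y | (y, x) ∈ E}.Subsingleton) : E ∈ Ebdd :=
  have key : ∀ s : Set ℕ, s.Subsingleton → s.Finite ∧ s.ncard ≤ 1 := fun _ hs =>
    ⟨hs.finite, (ncard_le_one hs.finite).2 fun _ ha _ hb => hs ha hb⟩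
  ⟨1, fun x => ⟨key _ (hout x), key _ (hin x)⟩⟩

theorem diagonal_mem_Ebdd : {p : ℕ × ℕ | p.1 = p.2} ∈ Ebdd :=
  mem_Ebdd_of_subsingleton (fun _ _ h₁ _ h₂ => h₁.symm.trans h₂) fun _ _ h₁ _ h₂ => h₁.trans h₂.symm

theorem range_graph_mem_Ebdd {A B : Set ℕ} (e : A ≃ B) :
    range (fun a : A => ((a : ℕ), (e a : ℕ))) ∈ Ebdd := by
  refine mem_Ebdd_of_subsingleton ?_ ?_
  · rintro x _ ⟨a, ha⟩ _ ⟨a', ha'⟩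
    obtain rfl : a = a' := Subtype.ext ((congrArg Prod.fst ha).trans (congrArg Prod.fst ha').symm)
    exact (congrArg Prod.snd ha).symm.trans (congrArg Prod.snd ha')
  · rintro x _ ⟨a, ha⟩ _ ⟨a', ha'⟩
    obtain rfl : a = a' := e.injective <| Subtype.ext
      ((congrArg Prod.snd ha).trans (congrArg Prod.snd ha').symm)
    exact (congrArg Prod.fst ha).symm.trans (congrArg Prod.fst ha')

theorem prod_self_mem_Ebdd {S : Set ℕ} (hS : S.Finite) : S ×ˢ S ∈ Ebdd := by
  have key : ∀ s ⊆ S, s.Finite ∧ s.ncard ≤ S.ncard := fun s hs =>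
    ⟨hS.subset hs, ncard_le_ncard hs hS⟩
  exact ⟨S.ncard, fun x => ⟨key _ fun _ h => h.2, key _ fun _ h => h.1⟩⟩

theorem exists_mem_CofE_Ebdd_of_finite {A B : Set ℕ} (hA : A.Finite) (hB : B.Finite)
    (hAB : A.Nonempty ↔ B.Nonempty) : ∃ 𝓐 ∈ CofE Ebdd, A ∈ 𝓐 ∧ B ∈ 𝓐 :=
  exists_mem_CofE_of_subset_relImage (prod_self_mem_Ebdd (hA.union hB))
    (subset_relImage_prod_self subset_union_left subset_union_left id)
    (subset_relImage_prod_self subset_union_left subset_union_right hAB.1)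
    (subset_relImage_prod_self subset_union_right subset_union_left hAB.2)
    (subset_relImage_prod_self subset_union_right subset_union_right id)

theorem exists_mem_CofE_Ebdd_of_infinite {A B : Set ℕ} (hA : A.Infinite) (hB : B.Infinite) :
    ∃ 𝓐 ∈ CofE Ebdd, A ∈ 𝓐 ∧ B ∈ 𝓐 := by
  have := hA.to_subtype
  have := hB.to_subtype
  obtain ⟨e⟩ := nonempty_equiv_of_countable (α := A) (β := B)
  have hE := union_mem_Ebdd (union_mem_Ebdd (range_graph_mem_Ebdd e)
    (range_graph_mem_Ebdd e.symm)) diagonal_mem_Ebdd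
  refine exists_mem_CofE_of_subset_relImage hE ?_ ?_ ?_ ?_
  · exact fun a ha => ⟨a, ha, Or.inr rfl⟩
  · exact fun a ha => ⟨e ⟨a, ha⟩, (e ⟨a, ha⟩).2, Or.inl (Or.inr ⟨e ⟨a, ha⟩, by simp⟩)⟩
  · exact fun b hb =>
      ⟨e.symm ⟨b, hb⟩, (e.symm ⟨b, hb⟩).2, Or.inl (Or.inl ⟨e.symm ⟨b, hb⟩, by simp⟩)⟩
  · exact fun b hb => ⟨b, hb, Or.inr rfl⟩

end BoundedGeometry

section Intervals

theorem Set.Finite.relImage_otimesFam_Ufam {F : Set ℕ} (hF : F.Finite) :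
    (relImage (otimesFam Ufam) F).Finite := by
  refine (hF.biUnion fun b _ => finite_Iic (2 * b)).subset ?_
  rintro y ⟨a, ha, _, ⟨i, rfl⟩, hia, hiy⟩
  exact mem_biUnion ha (mem_Iic.mpr (by simp only [mem_Icc] at hia hiy; omega))

theorem exists_mem_Icc_notMem_of_ncard_le {T : Set ℕ} {i : ℕ} (hT : T.Finite) (hi : T.ncard ≤ i) :
    ∃ b ∈ Icc i (2 * i), b ∉ T := by
  by_contra! hsub
  have hcard := ncard_le_ncard hsub hT
  rw [ncard_Icc_nat] at hcard
  omega

theorem univ_mem_AVfam_Ufam : univ ∈ AVfam Ufam :=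
  ⟨fun z _ => ⟨Icc z (2 * z), ⟨z, rfl⟩, le_rfl, by omega⟩,
    by rintro _ ⟨i, rfl⟩; exact ⟨i, mem_univ i, le_rfl, by omega⟩⟩

theorem range_mem_AVfam_Ufam {c : ℕ → ℕ} (hc : ∀ i, c i ∈ Icc i (2 * i)) :
    range c ∈ AVfam Ufam :=
  ⟨by rintro _ ⟨i, rfl⟩; exact ⟨Icc i (2 * i), ⟨i, rfl⟩, hc i⟩,
    by rintro _ ⟨i, rfl⟩; exact ⟨c i, ⟨i, rfl⟩, hc i⟩⟩

theorem AVfam_Ufam_notMem_CofE_Ebdd : AVfam Ufam ∉ CofE Ebdd := by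
  rintro ⟨E, ⟨n, hn⟩, hcov⟩
  obtain ⟨x, hx⟩ := ((finite_Iio n).biUnion fun y _ => (hn y).1.1).exists_notMem
  have hfiber : ∀ i, ∃ b ∈ Icc i (2 * i), (b, x) ∉ E := by
    intro i
    rcases lt_or_ge i n with hi | hi
    · exact ⟨i, ⟨le_rfl, by omega⟩, fun h => hx (mem_biUnion hi h)⟩
    · exact exists_mem_Icc_notMem_of_ncard_le (hn x).2.1 ((hn x).2.2.trans hi)
  choose c hc hcx using hfiber
  obtain ⟨_, ⟨i, rfl⟩, hix⟩ := hcov univ univ_mem_AVfam_Ufam _ (range_mem_AVfam_Ufam hc)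
    (mem_univ x)
  exact hcx i hix

end Intervals

theorem stmt19 :
    ASRUnifBounded (fun A B : Set ℕ => ∃ 𝓐 ∈ CofE Ebdd, A ∈ 𝓐 ∧ B ∈ 𝓐) Ufam ∧
    ¬ LSRUnifBounded (CofE Ebdd) Ufam := by
  refine ⟨fun A B hAB hBA => ?_,
    fun h => AVfam_Ufam_notMem_CofE_Ebdd (h Ufam subset_rfl ⟨_, 0, rfl⟩)⟩
  by_cases hA : A.Finite
  · exact exists_mem_CofE_Ebdd_of_finite hA (hA.relImage_otimesFam_Ufam.subset hBA)
      ⟨nonempty_of_subset_relImage hAB, nonempty_of_subset_relImage hBA⟩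
  · exact exists_mem_CofE_Ebdd_of_infinite hA fun hB => hA (hB.relImage_otimesFam_Ufam.subset hAB)
end
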